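/- arXiv:1411.6414 — 4 statements merged into one kernel-verified Lean document; each statement's English description precedes it below -/
import Mathlib

section
/- Let X and Y be normed linear spaces, q = 1, and suppose the graph of F is convex on a neighbourhood of (x̄,ȳ). Let f be defined from F by f(x,y) := ‖y−ȳ‖ on gph F and +∞ elsewhere. Then \overline{|∂f|}^{>}(x̄,ȳ) = \overline{|∂F|}_1(x̄,ȳ) and \overline{|∂f|}^{>+}(x̄,ȳ) = \overline{|∂F|}^{+}_1(x̄,ȳ). -/
open Filter Metric Set Topology
open scoped Classical

noncomputable section

namespace HolderPaper

/-- Extended-real quotient `a / d` of an extended real by a nonnegative real,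
with the convention that division by `0` yields `⊤`. -/
def equot (a : EReal) (d : ℝ) : EReal := if d = 0 then ⊤ else a * ((d⁻¹ : ℝ) : EReal)

section MetricDefs

variable {X Y : Type*} [MetricSpace X] [MetricSpace Y]

/-- The asymmetric maximum-type distance `d_ρ((x,y),(u,v)) = max{d(x,u), ρ d(y,v)}`. -/
def drho (ρ : ℝ) (p q : X × Y) : ℝ := max (dist p.1 q.1) (ρ * dist p.2 q.2)

/-- Positive part `f₊`. -/
def fplus (f : X × Y → EReal) (p : X × Y) : EReal := max (f p) 0

/-- Condition (P1): `f(x,y) > 0` whenever `y ≠ ybar`. -/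
def P1 (f : X × Y → EReal) (ybar : Y) : Prop := ∀ p : X × Y, p.2 ≠ ybar → 0 < f p

/-- Condition (P2): `liminf_{f(x,y)↓0} f(x,y)/d(y,ybar) > 0`. -/
def P2 (f : X × Y → EReal) (ybar : Y) : Prop :=
  0 < liminf (fun p : X × Y => equot (f p) (dist p.2 ybar)) ((𝓝[>] (0 : EReal)).comap f)

/-- The lower 0-level set `S(f) = {x | f(x,ybar) ≤ 0}`. -/
def Sf (f : X × Y → EReal) (ybar : Y) : Set X := {x | f (x, ybar) ≤ 0}

/-- The error bound modulus `Er f(xbar,ybar)`: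
`liminf` of `f(x,y)/d(x,S(f))` over pairs `(x,y)` with `f(x,y) > 0` as `x → xbar`. -/
def erMod (f : X × Y → EReal) (xbar : X) (ybar : Y) : EReal :=
  liminf (fun p : X × Y => equot (f p) (infDist p.1 (Sf f ybar)))
    ((𝓝 xbar).comap Prod.fst ⊓ 𝓟 {p : X × Y | 0 < f p})

/-- `f` has an error bound w.r.t. `x` at `(xbar,ybar)` with constant `τ`. -/
def hasErrorBound (f : X × Y → EReal) (xbar : X) (ybar : Y) (τ : ℝ) : Prop :=
  ∃ U ∈ 𝓝 xbar, ∀ x ∈ U, ∀ y : Y, ((τ * infDist x (Sf f ybar) : ℝ) : EReal) ≤ fplus f (x, y)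

/-- The nonlocal ρ-slope `|∇f|◇_ρ(x,y)` (set to `⊤` if `f(x,y) = ⊤`). -/
def nslope (f : X × Y → EReal) (ρ : ℝ) (p : X × Y) : EReal :=
  if f p = ⊤ then ⊤
  else ⨆ (q : X × Y) (_ : q ≠ p), equot (max (f p - fplus f q) 0) (drho ρ p q)

/-- The (local) ρ-slope `|∇f|_ρ(x,y)`. -/
def lslope (f : X × Y → EReal) (ρ : ℝ) (p : X × Y) : EReal :=
  limsup (fun q : X × Y => equot (max (f p - f q) 0) (drho ρ q p)) (𝓝[≠] p)

/-- The uniform strict outer slope `\overline{|∇f|}^◇(xbar,ybar)`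
(`lim_{ρ↓0}` of a quantity nonincreasing in `ρ`, i.e. the supremum over `ρ > 0`). -/
def uss (f : X × Y → EReal) (xbar : X) (ybar : Y) : EReal :=
  ⨆ (ρ : ℝ) (_ : 0 < ρ),
    ⨅ (p : X × Y) (_ : dist p.1 xbar < ρ ∧ 0 < f p ∧ f p < (ρ : EReal)), nslope f ρ p

/-- The strict outer slope `\overline{|∇f|}^{>}(xbar,ybar)`. -/
def sos (f : X × Y → EReal) (xbar : X) (ybar : Y) : EReal :=
  ⨆ (ρ : ℝ) (_ : 0 < ρ),
    ⨅ (p : X × Y) (_ : dist p.1 xbar < ρ ∧ 0 < f p ∧ f p < (ρ : EReal)), lslope f ρ p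

/-- The modified strict outer slope `\overline{|∇f|}^{>+}(xbar,ybar)`. -/
def msos (f : X × Y → EReal) (xbar : X) (ybar : Y) : EReal :=
  ⨆ (ρ : ℝ) (_ : 0 < ρ),
    ⨅ (p : X × Y) (_ : dist p.1 xbar < ρ ∧ 0 < f p ∧ f p < (ρ : EReal)),
      max (lslope f ρ p) (equot (f p) (dist p.1 xbar))

/-- Graph of a set-valued mapping. -/
def gph (F : X → Set Y) : Set (X × Y) := {p | p.2 ∈ F p.1}

/-- Inverse image `F⁻¹(ybar)`. -/
def Finv (F : X → Set Y) (ybar : Y) : Set X := {x | ybar ∈ F x}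

/-- The function `f(x,y) = (d(y,ybar))^q` on `gph F`, `+∞` elsewhere. -/
def fFq (F : X → Set Y) (ybar : Y) (qq : ℝ) : X × Y → EReal :=
  fun p => if p ∈ gph F then ((dist p.2 ybar ^ qq : ℝ) : EReal) else ⊤

/-- The function `f(x,y) = ‖y - ybar‖` on `gph F`, `+∞` elsewhere (case `q = 1`). -/
def fF1 (F : X → Set Y) (ybar : Y) : X × Y → EReal :=
  fun p => if p ∈ gph F then ((dist p.2 ybar : ℝ) : EReal) else ⊤

/-- The ρ-slope `|∇F|_ρ(x,y)` of a set-valued mapping at `(x,y) ∈ gph F`. -/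
def FslopeR (F : X → Set Y) (ybar : Y) (ρ : ℝ) (p : X × Y) : EReal :=
  limsup (fun u : X × Y => equot ((max (dist p.2 ybar - dist u.2 ybar) 0 : ℝ) : EReal) (drho ρ u p))
    (𝓝[gph F \ {p}] p)

/-- The nonlocal (q,ρ)-slope `|∇F|◇_{q,ρ}(x,y)` of a set-valued mapping. -/
def FnslopeQ (F : X → Set Y) (ybar : Y) (qq ρ : ℝ) (p : X × Y) : EReal :=
  ⨆ (u : X × Y) (_ : u ∈ gph F ∧ u ≠ p),
    equot ((max (dist p.2 ybar ^ qq - dist u.2 ybar ^ qq) 0 : ℝ) : EReal) (drho ρ u p)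

/-- The uniform strict q-slope `\overline{|∇F|}^◇_q(xbar,ybar)`. -/
def ussFq (F : X → Set Y) (xbar : X) (ybar : Y) (qq : ℝ) : EReal :=
  ⨆ (ρ : ℝ) (_ : 0 < ρ),
    ⨅ (p : X × Y)
      (_ : p ∈ gph F ∧ dist p.1 xbar < ρ ∧ dist p.2 ybar < ρ ∧ p.1 ∉ Finv F ybar),
      FnslopeQ F ybar qq ρ p

/-- The strict q-slope `\overline{|∇F|}_q(xbar,ybar)`. -/
def sosFq (F : X → Set Y) (xbar : X) (ybar : Y) (qq : ℝ) : EReal :=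
  (qq : EReal) *
    ⨆ (ρ : ℝ) (_ : 0 < ρ),
      ⨅ (p : X × Y)
        (_ : p ∈ gph F ∧ dist p.1 xbar < ρ ∧ dist p.2 ybar < ρ ∧ p.1 ∉ Finv F ybar),
        ((dist p.2 ybar ^ (qq - 1) : ℝ) : EReal) * FslopeR F ybar ρ p

/-- The modified strict q-slope `\overline{|∇F|}^{+}_q(xbar,ybar)`. -/
def msosFq (F : X → Set Y) (xbar : X) (ybar : Y) (qq : ℝ) : EReal :=
  ⨆ (ρ : ℝ) (_ : 0 < ρ),
    ⨅ (p : X × Y)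
      (_ : p ∈ gph F ∧ dist p.1 xbar < ρ ∧ dist p.2 ybar < ρ ∧ p.1 ∉ Finv F ybar),
      max (((qq * dist p.2 ybar ^ (qq - 1) : ℝ) : EReal) * FslopeR F ybar ρ p)
        (equot ((dist p.2 ybar ^ qq : ℝ) : EReal) (dist p.1 xbar))

/-- The Hölder subregularity modulus of order `q`:
`liminf_{x→xbar, x∉F⁻¹(ybar)} (d(ybar,F(x)))^q / d(x,F⁻¹(ybar))`
(with `d(ybar,∅) = +∞`). -/
def srq (F : X → Set Y) (xbar : X) (ybar : Y) (qq : ℝ) : EReal :=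
  liminf
    (fun x : X =>
      equot (if F x = ∅ then ⊤ else ((infDist ybar (F x) ^ qq : ℝ) : EReal))
        (infDist x (Finv F ybar)))
    (𝓝[(Finv F ybar)ᶜ] xbar)

end MetricDefs

section NormedDefs

variable {X Y : Type*} [NormedAddCommGroup X] [NormedSpace ℝ X]
  [NormedAddCommGroup Y] [NormedSpace ℝ Y]

/-- The Fréchet subdifferential of `f : X × Y → ℝ∪{+∞}` at `p`, as a set of pairs of
continuous linear functionals (empty when `f p = ⊤`). -/
def fsubdiff (f : X × Y → EReal) (p : X × Y) : Set ((X →L[ℝ] ℝ) × (Y →L[ℝ] ℝ)) :=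
  {φ | f p ≠ ⊤ ∧ 0 ≤ liminf
      (fun q : X × Y =>
        equot (f q - f p - ((φ.1 (q.1 - p.1) + φ.2 (q.2 - p.2) : ℝ) : EReal)) (dist q p))
      (𝓝[≠] p)}

/-- The subdifferential ρ-slope `|∂f|_ρ(x,y)`. -/
def sdslope (f : X × Y → EReal) (ρ : ℝ) (p : X × Y) : EReal :=
  ⨅ (φ : (X →L[ℝ] ℝ) × (Y →L[ℝ] ℝ)) (_ : φ ∈ fsubdiff f p ∧ ‖φ.2‖ < ρ), (‖φ.1‖ : EReal)

/-- The strict outer subdifferential slope `\overline{|∂f|}^{>}(xbar,ybar)`. -/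
def ssds (f : X × Y → EReal) (xbar : X) (ybar : Y) : EReal :=
  ⨆ (ρ : ℝ) (_ : 0 < ρ),
    ⨅ (p : X × Y) (_ : dist p.1 xbar < ρ ∧ 0 < f p ∧ f p < (ρ : EReal)), sdslope f ρ p

/-- The modified strict outer subdifferential slope `\overline{|∂f|}^{>+}(xbar,ybar)`. -/
def mssds (f : X × Y → EReal) (xbar : X) (ybar : Y) : EReal :=
  ⨆ (ρ : ℝ) (_ : 0 < ρ),
    ⨅ (p : X × Y) (_ : dist p.1 xbar < ρ ∧ 0 < f p ∧ f p < (ρ : EReal)),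
      max (sdslope f ρ p) (equot (f p) (dist p.1 xbar))

/-- `f` is convex on the set `U` (with extended-real values). -/
def convexOnE (U : Set (X × Y)) (f : X × Y → EReal) : Prop :=
  Convex ℝ U ∧ ∀ p ∈ U, ∀ q ∈ U, ∀ t : ℝ, 0 ≤ t → t ≤ 1 →
    f (t • p + (1 - t) • q) ≤ (t : EReal) * f p + ((1 - t : ℝ) : EReal) * f q

/-- The Fréchet normal cone to `Ω ⊂ X × Y` at `p ∈ Ω`. -/
def ncone (Ω : Set (X × Y)) (p : X × Y) : Set ((X →L[ℝ] ℝ) × (Y →L[ℝ] ℝ)) :=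
  {φ | limsup
      (fun q : X × Y =>
        equot (((φ.1 (q.1 - p.1) + φ.2 (q.2 - p.2) : ℝ)) : EReal) (dist q p))
      (𝓝[Ω \ {p}] p) ≤ 0}

/-- The Fréchet coderivative `D*F(x,y)(y*)`. -/
def coderiv (F : X → Set Y) (p : X × Y) (ys : Y →L[ℝ] ℝ) : Set (X →L[ℝ] ℝ) :=
  {xs | (xs, -ys) ∈ ncone (gph F) p}

/-- The (normalized) duality mapping `J(y) = {y* : ‖y*‖ = 1, ⟨y*,y⟩ = ‖y‖}`. -/
def Jdual (y : Y) : Set (Y →L[ℝ] ℝ) := {ys | ‖ys‖ = 1 ∧ ys y = ‖y‖}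

/-- The subdifferential ρ-slope of `F` at `(x,y) ∈ gph F`:
`inf{‖x*‖ : x* ∈ D*F(x,y)(J(y-ybar) + ρ𝔹*)}`. -/
def FsdSlope (F : X → Set Y) (ybar : Y) (ρ : ℝ) (p : X × Y) : EReal :=
  ⨅ (xs : X →L[ℝ] ℝ)
    (_ : ∃ ws : Y →L[ℝ] ℝ, (∃ ys ∈ Jdual (p.2 - ybar), ‖ws - ys‖ ≤ ρ) ∧ xs ∈ coderiv F p ws),
    (‖xs‖ : EReal)

/-- `ξ_q(y) = ‖y - ybar‖^{1-q}/q`. -/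
def xiq (qq : ℝ) (ybar y : Y) : ℝ := ‖y - ybar‖ ^ (1 - qq) / qq

/-- The strict subdifferential q-slope `\overline{|∂F|}_q(xbar,ybar)`. -/
def ssdFq (F : X → Set Y) (xbar : X) (ybar : Y) (qq : ℝ) : EReal :=
  (qq : EReal) *
    ⨆ (ρ : ℝ) (_ : 0 < ρ),
      ⨅ (p : X × Y)
        (_ : p ∈ gph F ∧ ‖p.1 - xbar‖ < ρ ∧ ‖p.2 - ybar‖ < ρ ∧ p.1 ∉ Finv F ybar),
        ((‖p.2 - ybar‖ ^ (qq - 1) : ℝ) : EReal) * FsdSlope F ybar (xiq qq ybar p.2 * ρ) p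

/-- The modified strict subdifferential q-slope `\overline{|∂F|}^{+}_q(xbar,ybar)`. -/
def msdFq (F : X → Set Y) (xbar : X) (ybar : Y) (qq : ℝ) : EReal :=
  ⨆ (ρ : ℝ) (_ : 0 < ρ),
    ⨅ (p : X × Y)
      (_ : p ∈ gph F ∧ ‖p.1 - xbar‖ < ρ ∧ ‖p.2 - ybar‖ < ρ ∧ p.1 ∉ Finv F ybar),
      max (((qq * ‖p.2 - ybar‖ ^ (qq - 1) : ℝ) : EReal) * FsdSlope F ybar (xiq qq ybar p.2 * ρ) p)
        (equot ((‖p.2 - ybar‖ ^ qq : ℝ) : EReal) ‖p.1 - xbar‖)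

/-- The normalized ε-enlargement `J^q_ε(y)` of the q-duality mapping
`J^q(y) = q‖y‖^{q-1} J(y)`. -/
def JqEps (qq ε : ℝ) (y : Y) : Set (Y →L[ℝ] ℝ) :=
  {ws | ∃ us ∈ Jdual y, ∃ vs : Y →L[ℝ] ℝ, ‖vs‖ ≤ 1 ∧
    (qq * ‖y‖ ^ (qq - 1)) • us + ε • vs ≠ 0 ∧
    ws = ‖(qq * ‖y‖ ^ (qq - 1)) • us + ε • vs‖⁻¹ • ((qq * ‖y‖ ^ (qq - 1)) • us + ε • vs)}

/-- The constant `β` of Li and Mordukhovich. -/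
def betaLM (F : X → Set Y) (xbar : X) (ybar : Y) (qq : ℝ) : EReal :=
  ⨆ (ε : ℝ) (_ : 0 < ε),
    ⨅ (p : X × Y) (xs : X →L[ℝ] ℝ)
      (_ : p ∈ gph F ∧ p.1 ∉ Finv F ybar ∧ ‖p.1 - xbar‖ < ε ∧
           ‖p.2 - ybar‖ < min ε (‖p.1 - xbar‖ ^ (1 / 2 : ℝ)) ∧
           ∃ ws ∈ JqEps qq ε (p.2 - ybar), xs ∈ coderiv F p ws),
      ((qq * ‖xs‖ * ‖p.2 - ybar‖ ^ (qq - 1) : ℝ) : EReal)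

end NormedDefs

end HolderPaper

/-!
Write `f = ‖· - ybar‖ ∘ Prod.snd + δ_{gph F}`. A coderivative element `x* ∈ D*F(p)(w*)`, with `w*`
within `ρ` of some `y* ∈ J(p.2 - ybar)`, gives the subgradient `(x*, y* - w*)` of `f`, because `y*`
is a subgradient of the norm at `p.2 - ybar`; so `|∂f|_{ρ'} ≤ |∂F|_ρ` for `ρ < ρ'`.
Conversely, where `gph F` is convex a Fréchet subgradient `φ` of `f` is a global subgradient on the
convex piece, and separating the strict epigraph of `w ↦ ‖p.2 - ybar + w‖ - ‖p.2 - ybar‖` from the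
image of the graph under `(u, v) ↦ (v - p.2, φ((u, v) - p))` produces `y* ∈ J(p.2 - ybar)` with
`φ - (0, y*)` normal to `gph F`: the exact convex sum rule. At points with `ybar ∈ F(p.1)` the same
global inequality forces `‖φ.2‖ ≥ 1`, so for `ρ ≤ 1` they carry no admissible subgradient; this is
why the slopes of `F` may leave out `F⁻¹(ybar)`.
-/

section Convex

variable {E : Type*} [NormedAddCommGroup E] [NormedSpace ℝ E]

theorem ConvexOn.map_sub_le_of_frechet {C : Set E} {g : E → ℝ} (hg : ConvexOn ℝ C g)
    {ℓ : E →L[ℝ] ℝ} {p q : E} (hp : p ∈ C) (hq : q ∈ C)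
    (hℓ : ∀ c : ℝ, 0 < c → ∀ᶠ z in 𝓝[C \ {p}] p, ℓ (z - p) ≤ g z - g p + c * ‖z - p‖) :
    ℓ (q - p) ≤ g q - g p := by
  rcases eq_or_ne q p with rfl | hqp
  · simp
  by_contra! hlt
  have hd : 0 < ‖q - p‖ := norm_pos_iff.2 (sub_ne_zero.2 hqp)
  set K := ℓ (q - p) - (g q - g p)
  have hsegment : ∀ t ∈ Ioo (0 : ℝ) 1, p + t • (q - p) ∈ C \ {p} := fun t ht => by
    refine ⟨?_, ?_⟩
    · convert hg.1 hp hq (sub_nonneg.2 ht.2.le) ht.1.le (sub_add_cancel 1 t) using 1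
      module
    · simpa [sub_eq_zero, hqp] using ht.1.ne'
  have htend : Tendsto (fun t : ℝ => p + t • (q - p)) (𝓝[Ioo 0 1] 0) (𝓝[C \ {p}] p) := by
    refine tendsto_nhdsWithin_iff.2 ⟨?_, eventually_nhdsWithin_of_forall hsegment⟩
    have hc : Continuous fun t : ℝ => p + t • (q - p) := by fun_prop
    simpa using hc.continuousWithinAt (s := Ioo 0 1) (x := 0) |>.tendsto
  have : (𝓝[Ioo (0 : ℝ) 1] 0).NeBot := left_nhdsWithin_Ioo_neBot zero_lt_one
  obtain ⟨t, hz, ht⟩ := ((htend.eventually (hℓ (K / (2 * ‖q - p‖)) (by positivity))).and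
    self_mem_nhdsWithin).exists
  have hconv : g (p + t • (q - p)) ≤ g p + t * (g q - g p) := by
    have := hg.2 hp hq (sub_nonneg.2 ht.2.le) ht.1.le (sub_add_cancel 1 t)
    rw [show p + t • (q - p) = (1 - t) • p + t • q by module]
    simp only [smul_eq_mul] at this
    linarith
  rw [add_sub_cancel_left, map_smul, smul_eq_mul, norm_smul, Real.norm_of_nonneg ht.1.le,
    show K / (2 * ‖q - p‖) * (t * ‖q - p‖) = t * K / 2 by field_simp] at hz
  nlinarith [mul_pos ht.1 (sub_pos.2 hlt)]

theorem ConvexOn.exists_continuousLinearMap_between {h : E → ℝ} (hconv : ConvexOn ℝ univ h)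
    (hcont : Continuous h) (h0 : h 0 = 0) {B : Set (E × ℝ)} (hB : Convex ℝ B)
    (hB0 : (0 : E × ℝ) ∈ B) (hBh : ∀ z ∈ B, z.2 ≤ h z.1) :
    ∃ ℓ : E →L[ℝ] ℝ, (∀ w, ℓ w ≤ h w) ∧ ∀ z ∈ B, z.2 ≤ ℓ z.1 := by
  set A : Set (E × ℝ) := {z | z.1 ∈ univ ∧ h z.1 < z.2}
  have hAopen : IsOpen A := by
    simpa [A] using isOpen_lt (hcont.comp continuous_fst) continuous_snd
  have hdisj : Disjoint A B := disjoint_left.2 fun z hzA hzB => (hBh z hzB).not_gt hzA.2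
  obtain ⟨Φ, s, hΦA, hΦB⟩ :=
    geometric_hahn_banach_open hconv.convex_strict_epigraph hAopen hB hdisj
  set α := Φ (0, 1)
  have hΦ : ∀ w t, Φ (w, t) = Φ (w, 0) + t * α := fun w t => by
    rw [← smul_eq_mul, ← map_smul, ← map_add, Prod.smul_mk, smul_zero, smul_eq_mul, mul_one,
      Prod.mk_add_mk, add_zero, zero_add]
  have hΦ0 : ∀ t, Φ (0, t) = t * α := fun t => by rw [hΦ, Prod.mk_zero_zero, map_zero, zero_add]
  have hmemA : ∀ w t, h w < t → (w, t) ∈ A := fun w t ht => ⟨trivial, ht⟩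
  have hs : s ≤ 0 := by simpa using hΦB 0 hB0
  have hα : α < s := by simpa [hΦ0] using hΦA _ (hmemA 0 1 (by rw [h0]; exact one_pos))
  have hs' : 0 ≤ s := by
    by_contra! hneg
    have := hΦA _
      (hmemA 0 (s / (2 * α)) (by rw [h0]; exact div_pos_of_neg_of_neg hneg (by linarith)))
    rw [hΦ0, div_mul_eq_mul_div, mul_div_mul_right _ _ (by linarith : α ≠ 0)] at this
    linarith
  have hα0 : 0 < -α := by linarith
  set ℓ : E →L[ℝ] ℝ := (-α)⁻¹ • Φ.comp (ContinuousLinearMap.inl ℝ E ℝ)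
  have hℓ : ∀ w, ℓ w = (-α)⁻¹ * Φ (w, 0) := fun _ => rfl
  refine ⟨ℓ, fun w => le_of_forall_gt fun t ht => ?_, fun z hz => ?_⟩
  · have := hΦA _ (hmemA w t ht)
    rw [hΦ] at this
    rw [hℓ, inv_mul_lt_iff₀ hα0]
    linarith
  · have := hΦB z hz
    rw [hΦ] at this
    rw [hℓ, le_inv_mul_iff₀ hα0]
    linarith

end Convex

namespace HolderPaper

section Equot

lemma equot_eq_div (a : EReal) {d : ℝ} (hd : d ≠ 0) : equot a d = a / d := by
  rw [equot, if_neg hd, EReal.coe_inv]; rfl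

variable {α : Type*} {l : Filter α} {G : α → EReal} {d : α → ℝ}

lemma le_liminf_equot_iff (hd : ∀ᶠ a in l, 0 < d a) :
    0 ≤ liminf (fun a => equot (G a) (d a)) l ↔
      ∀ c : ℝ, 0 < c → ∀ᶠ a in l, ((-(c * d a) : ℝ) : EReal) ≤ G a := by
  have key : ∀ c : ℝ,
      ∀ᶠ a in l, ((c : EReal) ≤ equot (G a) (d a) ↔ ((c * d a : ℝ) : EReal) ≤ G a) :=
    fun c => hd.mono fun a ha => by
      rw [equot_eq_div _ ha.ne',
        EReal.le_div_iff_mul_le (by exact_mod_cast ha) (EReal.coe_ne_top _),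
        EReal.coe_mul]
  rw [le_liminf_iff']
  constructor
  · intro h c hc
    filter_upwards [h (-c : ℝ) (by exact_mod_cast neg_lt_zero.2 hc), key (-c)] with a ha hk
    simpa [neg_mul] using hk.1 ha
  · intro h y hy
    obtain ⟨c, hyc, hc⟩ := EReal.exists_between_coe_real hy
    filter_upwards [h (-c) (by linarith [EReal.coe_neg'.1 hc]), key c] with a ha hk
    exact hyc.le.trans (hk.2 (by simpa [neg_mul] using ha))

lemma limsup_equot_le_iff (hd : ∀ᶠ a in l, 0 < d a) :
    limsup (fun a => equot (G a) (d a)) l ≤ 0 ↔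
      ∀ c : ℝ, 0 < c → ∀ᶠ a in l, G a ≤ ((c * d a : ℝ) : EReal) := by
  have key : ∀ c : ℝ, ∀ᶠ a in l, (equot (G a) (d a) ≤ c ↔ G a ≤ ((c * d a : ℝ) : EReal)) :=
    fun c => hd.mono fun a ha => by
      rw [equot_eq_div _ ha.ne',
        EReal.div_le_iff_le_mul (by exact_mod_cast ha) (EReal.coe_ne_top _),
        ← EReal.coe_mul, mul_comm]
  rw [limsup_le_iff']
  constructor
  · intro h c hc
    filter_upwards [h c (by exact_mod_cast hc), key c] with a ha hk
    exact hk.1 ha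
  · intro h y hy
    obtain ⟨c, hc, hcy⟩ := EReal.exists_between_coe_real hy
    filter_upwards [h c (by exact_mod_cast hc), key c] with a ha hk
    exact (hk.2 ha).trans hcy.le

end Equot

lemma iSup_iInf_le_iSup_iInf {ι : Type*} {S T : ℝ → ι → Prop} {a b : ℝ → ι → EReal}
    (h : ∀ ρ > 0, ∃ σ > 0, ∀ i, T σ i → ⨅ (j) (_ : S ρ j), a ρ j ≤ b σ i) :
    ⨆ (ρ) (_ : 0 < ρ), ⨅ (j) (_ : S ρ j), a ρ j ≤ ⨆ (σ) (_ : 0 < σ), ⨅ (i) (_ : T σ i), b σ i :=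
  iSup₂_le fun ρ hρ =>
    let ⟨σ, hσ, hσi⟩ := h ρ hρ
    le_iSup₂_of_le σ hσ (le_iInf₂ hσi)

section Graph

variable {X Y : Type*} [NormedAddCommGroup Y] {F : X → Set Y} {ybar : Y} {p : X × Y}

lemma fF1_of_mem (hp : p ∈ gph F) :
    fF1 F ybar p = ((‖p.2 - ybar‖ : ℝ) : EReal) := by
  rw [fF1, if_pos hp, dist_eq_norm]

lemma fF1_of_notMem (hp : p ∉ gph F) :
    fF1 F ybar p = ⊤ := if_neg hp

lemma pos_and_fF1_lt_iff {ρ : ℝ} :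
    (0 < fF1 F ybar p ∧ fF1 F ybar p < (ρ : EReal)) ↔
      p ∈ gph F ∧ p.2 ≠ ybar ∧ ‖p.2 - ybar‖ < ρ := by
  by_cases hp : p ∈ gph F
  · simp [fF1_of_mem hp, hp, sub_eq_zero]
  · simp [fF1_of_notMem hp, hp]

end Graph

section Normed

variable {X Y : Type*} [NormedAddCommGroup X] [NormedSpace ℝ X]
  [NormedAddCommGroup Y] [NormedSpace ℝ Y] {F : X → Set Y} {xbar : X} {ybar : Y} {p : X × Y}

lemma mem_ncone_iff {Ω : Set (X × Y)} {φ : (X →L[ℝ] ℝ) × (Y →L[ℝ] ℝ)} :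
    φ ∈ ncone Ω p ↔ ∀ c : ℝ, 0 < c →
      ∀ᶠ q in 𝓝[Ω \ {p}] p, φ.1 (q.1 - p.1) + φ.2 (q.2 - p.2) ≤ c * dist q p := by
  have hd : ∀ᶠ q in 𝓝[Ω \ {p}] p, 0 < dist q p :=
    eventually_nhdsWithin_of_forall fun _ hq => dist_pos.2 hq.2
  simp only [ncone, mem_ofPred_eq, limsup_equot_le_iff hd, EReal.coe_le_coe_iff]

lemma mem_fsubdiff_fF1_iff (hp : p ∈ gph F) {φ : (X →L[ℝ] ℝ) × (Y →L[ℝ] ℝ)} :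
    φ ∈ fsubdiff (fF1 F ybar) p ↔ ∀ c : ℝ, 0 < c → ∀ᶠ q in 𝓝[gph F \ {p}] p,
      φ.1 (q.1 - p.1) + φ.2 (q.2 - p.2) ≤ ‖q.2 - ybar‖ - ‖p.2 - ybar‖ + c * dist q p := by
  have hfp : fF1 F ybar p ≠ ⊤ := by rw [fF1_of_mem hp]; exact EReal.coe_ne_top _
  have hpunct : ∀ᶠ q in 𝓝[≠] p, 0 < dist q p :=
    eventually_nhdsWithin_of_forall fun _ hq => dist_pos.2 hq
  simp only [fsubdiff, mem_ofPred_eq, hfp, ne_eq, not_false_eq_true, true_and,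
    le_liminf_equot_iff hpunct]
  refine forall₂_congr fun c _ => ?_
  rw [eventually_nhdsWithin_iff, eventually_nhdsWithin_iff]
  refine eventually_congr (Eventually.of_forall fun q => ?_)
  by_cases hq : q ∈ gph F
  · rw [fF1_of_mem hq, fF1_of_mem hp, ← EReal.coe_sub, ← EReal.coe_sub, EReal.coe_le_coe_iff]
    simp only [Set.mem_sdiff, hq, true_and, mem_compl_iff]
    exact forall_congr' fun _ => by constructor <;> intro h <;> linarith
  · rw [fF1_of_notMem hq, fF1_of_mem hp, EReal.top_sub_coe, EReal.top_sub_coe]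
    simp [hq]

lemma Jdual_apply_le {y : Y} {ys : Y →L[ℝ] ℝ} (hys : ys ∈ Jdual y) (w : Y) :
    ys w ≤ ‖y + w‖ - ‖y‖ := by
  have h := (le_abs_self _).trans (ys.le_opNorm (y + w))
  rw [map_add, hys.2, hys.1, one_mul] at h
  linarith

lemma mem_Jdual_of_forall_le {y : Y} (hy : y ≠ 0) {ys : Y →L[ℝ] ℝ}
    (h : ∀ w, ys w ≤ ‖y + w‖ - ‖y‖) : ys ∈ Jdual y := by
  have hle : ∀ w, ys w ≤ ‖w‖ := fun w => (h w).trans (by linarith [norm_add_le y w])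
  have hnorm : ‖ys‖ ≤ 1 := ys.opNorm_le_bound zero_le_one fun w => by
    rw [one_mul, Real.norm_eq_abs, abs_le]
    exact ⟨by linarith [hle (-w), map_neg ys w, norm_neg w], hle w⟩
  have hyy : ‖y‖ ≤ ys y := by
    have := h (-y)
    rw [map_neg, add_neg_cancel, norm_zero] at this
    linarith
  have hyy' : ys y ≤ ‖ys‖ * ‖y‖ := (le_abs_self _).trans (ys.le_opNorm y)
  have hpos : 0 < ‖y‖ := norm_pos_iff.2 hy
  refine ⟨le_antisymm hnorm ((le_mul_iff_one_le_left hpos).1 (hyy.trans hyy')), le_antisymm ?_ hyy⟩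
  simpa using hyy'.trans (mul_le_mul_of_nonneg_right hnorm hpos.le)

lemma mem_fsubdiff_fF1_of_mem_coderiv (hp : p ∈ gph F) {xs : X →L[ℝ] ℝ} {ys ws : Y →L[ℝ] ℝ}
    (hys : ys ∈ Jdual (p.2 - ybar)) (hxs : xs ∈ coderiv F p ws) :
    (xs, ys - ws) ∈ fsubdiff (fF1 F ybar) p := by
  refine (mem_fsubdiff_fF1_iff hp).2 fun c hc => (mem_ncone_iff.1 hxs c hc).mono fun q hq => ?_
  have hJ := Jdual_apply_le hys (q.2 - p.2)
  rw [sub_add_sub_cancel'] at hJ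
  simp only [sub_apply, neg_apply] at hq ⊢
  linarith

lemma map_sub_le_of_mem_fsubdiff_fF1 {U : Set (X × Y)} (hconv : Convex ℝ (gph F ∩ U))
    {q : X × Y} (hp : p ∈ gph F ∩ U) (hq : q ∈ gph F ∩ U) {φ : (X →L[ℝ] ℝ) × (Y →L[ℝ] ℝ)}
    (hφ : φ ∈ fsubdiff (fF1 F ybar) p) :
    φ.1 (q.1 - p.1) + φ.2 (q.2 - p.2) ≤ ‖q.2 - ybar‖ - ‖p.2 - ybar‖ := by
  have hg : ConvexOn ℝ (gph F ∩ U) fun z : X × Y => ‖z.2 - ybar‖ :=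
    (convexOn_univ_norm.comp_affineMap ((LinearMap.snd ℝ X Y).toAffineMap -
      AffineMap.const ℝ (X × Y) ybar)).subset (subset_univ _) hconv
  refine hg.map_sub_le_of_frechet (ℓ := φ.1.coprod φ.2) hp hq (fun c hc => ?_)
  filter_upwards [nhdsWithin_mono p (sdiff_subset_sdiff_left inter_subset_left)
    ((mem_fsubdiff_fF1_iff hp.1).1 hφ c hc)] with z hz
  simpa [dist_eq_norm] using hz

lemma exists_Jdual_mem_coderiv_of_mem_fsubdiff {U : Set (X × Y)} (hconv : Convex ℝ (gph F ∩ U))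
    (hU : U ∈ 𝓝 p) (hp : p ∈ gph F) (hpne : p.2 ≠ ybar) {φ : (X →L[ℝ] ℝ) × (Y →L[ℝ] ℝ)}
    (hφ : φ ∈ fsubdiff (fF1 F ybar) p) :
    ∃ ys ∈ Jdual (p.2 - ybar), φ.1 ∈ coderiv F p (ys - φ.2) := by
  have hpC : p ∈ gph F ∩ U := ⟨hp, mem_of_mem_nhds hU⟩
  set L : X × Y →L[ℝ] Y × ℝ := (ContinuousLinearMap.snd ℝ X Y).prod (φ.1.coprod φ.2)
  have hL : ∀ q : X × Y, L (-p + q) = (q.2 - p.2, φ.1 (q.1 - p.1) + φ.2 (q.2 - p.2)) := fun q => by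
    simp [L, neg_add_eq_sub]
  have hconvh : ConvexOn ℝ univ fun w => ‖p.2 - ybar + w‖ - ‖p.2 - ybar‖ := by
    convert (convexOn_univ_norm.translate_right (p.2 - ybar)).add_const (-‖p.2 - ybar‖) using 1 <;>
      ext <;> simp [sub_eq_add_neg]
  obtain ⟨ys, hys_le, hys_ge⟩ := hconvh.exists_continuousLinearMap_between (by fun_prop) (by simp)
    ((hconv.translate (-p)).linear_image L.toLinearMap) ⟨-p + p, ⟨p, hpC, rfl⟩, by simp⟩ (by
      rintro _ ⟨_, ⟨q, hq, rfl⟩, rfl⟩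
      have := map_sub_le_of_mem_fsubdiff_fF1 hconv hpC hq hφ
      rwa [ContinuousLinearMap.coe_coe, hL, sub_add_sub_cancel'])
  refine ⟨ys, mem_Jdual_of_forall_le (sub_ne_zero.2 hpne) hys_le, ?_⟩
  refine mem_ncone_iff.2 fun c hc => ?_
  filter_upwards [self_mem_nhdsWithin, nhdsWithin_le_nhds hU] with q hq hqU
  have hq_le := hys_ge (L (-p + q)) ⟨_, ⟨q, ⟨hq.1, hqU⟩, rfl⟩, rfl⟩
  rw [hL] at hq_le
  simp only [neg_sub, sub_apply]
  linarith [mul_nonneg hc.le (dist_nonneg (x := q) (y := p))]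

lemma FsdSlope_anti {σ ρ : ℝ} (h : σ ≤ ρ) :
    FsdSlope F ybar ρ p ≤ FsdSlope F ybar σ p :=
  le_iInf₂ fun xs ⟨ws, ⟨ys, hys, hws⟩, hxs⟩ => iInf₂_le xs ⟨ws, ⟨ys, hys, hws.trans h⟩, hxs⟩

lemma sdslope_le_FsdSlope (hp : p ∈ gph F) {ρ ρ' : ℝ} (hρ : ρ < ρ') :
    sdslope (fF1 F ybar) ρ' p ≤ FsdSlope F ybar ρ p :=
  le_iInf₂ fun xs ⟨ws, ⟨ys, hys, hws⟩, hxs⟩ =>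
    iInf₂_le (xs, ys - ws) ⟨mem_fsubdiff_fF1_of_mem_coderiv hp hys hxs,
      (norm_sub_rev ys ws).trans_lt (hws.trans_lt hρ)⟩

lemma FsdSlope_le_sdslope {U : Set (X × Y)} (hconv : Convex ℝ (gph F ∩ U)) (hU : U ∈ 𝓝 p)
    (hp : p ∈ gph F) (hpne : p.2 ≠ ybar) (ρ : ℝ) :
    FsdSlope F ybar ρ p ≤ sdslope (fF1 F ybar) ρ p := by
  refine le_iInf₂ fun φ ⟨hφ, hφρ⟩ => ?_
  obtain ⟨ys, hys, hcod⟩ := exists_Jdual_mem_coderiv_of_mem_fsubdiff hconv hU hp hpne hφ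
  exact iInf₂_le φ.1 ⟨ys - φ.2, ⟨ys, hys, by simpa using hφρ.le⟩, hcod⟩

lemma sdslope_eq_top {U : Set (X × Y)} (hconv : Convex ℝ (gph F ∩ U)) (hp : p ∈ gph F ∩ U)
    (hpbar : (p.1, ybar) ∈ gph F ∩ U) (hpne : p.2 ≠ ybar) {ρ : ℝ} (hρ : ρ ≤ 1) :
    sdslope (fF1 F ybar) ρ p = ⊤ := by
  refine eq_top_iff.2 (le_iInf₂ fun φ ⟨hφ, hφρ⟩ => absurd hφρ (not_lt.2 ?_))
  have h := map_sub_le_of_mem_fsubdiff_fF1 hconv hp hpbar hφ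
  rw [sub_self, map_zero, zero_add, sub_self, norm_zero, ← neg_sub, map_neg] at h
  have hpos : 0 < ‖p.2 - ybar‖ := norm_pos_iff.2 (sub_ne_zero.2 hpne)
  have hle : φ.2 (p.2 - ybar) ≤ ‖φ.2‖ * ‖p.2 - ybar‖ := (le_abs_self _).trans (φ.2.le_opNorm _)
  exact hρ.trans ((le_mul_iff_one_le_left hpos).1 (by linarith))

theorem iSup_iInf_max_sdslope_eq (hconv : ∃ U ∈ 𝓝 (xbar, ybar), Convex ℝ (gph F ∩ U))
    (g : X × Y → EReal) :
    ⨆ (ρ : ℝ) (_ : 0 < ρ), ⨅ (p : X × Y)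
        (_ : dist p.1 xbar < ρ ∧ 0 < fF1 F ybar p ∧ fF1 F ybar p < (ρ : EReal)),
        max (sdslope (fF1 F ybar) ρ p) (g p) =
      ⨆ (ρ : ℝ) (_ : 0 < ρ), ⨅ (p : X × Y)
        (_ : p ∈ gph F ∧ ‖p.1 - xbar‖ < ρ ∧ ‖p.2 - ybar‖ < ρ ∧ p.1 ∉ Finv F ybar),
        max (FsdSlope F ybar ρ p) (g p) := by
  obtain ⟨U, hU, hUconv⟩ := hconv
  obtain ⟨ε, hε, hεU⟩ := Metric.mem_nhds_iff.1 hU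
  have hconv : Convex ℝ (gph F ∩ ball (xbar, ybar) ε) := by
    simpa [inter_assoc, inter_eq_right.2 hεU] using hUconv.inter (convex_ball (xbar, ybar) ε)
  have hball : ∀ {p : X × Y}, dist p.1 xbar < ε → dist p.2 ybar < ε → p ∈ ball (xbar, ybar) ε :=
    fun h1 h2 => by rw [mem_ball, Prod.dist_eq]; exact max_lt h1 h2
  apply le_antisymm
  · refine iSup_iInf_le_iSup_iInf fun ρ hρ => ⟨ρ / 2, half_pos hρ, fun p ⟨hp, hpx, hpy, hpF⟩ => ?_⟩
    have hpne : p.2 ≠ ybar := fun h => hpF (h ▸ hp)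
    refine iInf₂_le_of_le p ⟨?_, pos_and_fF1_lt_iff.2 ⟨hp, hpne, by linarith⟩⟩
      (max_le_max (sdslope_le_FsdSlope hp (half_lt_self hρ)) le_rfl)
    rw [dist_eq_norm]; linarith
  · refine iSup_iInf_le_iSup_iInf fun ρ hρ => ?_
    obtain ⟨σ, hσ, hσρ, hσ1, hσε⟩ : ∃ σ > 0, σ ≤ ρ ∧ σ ≤ 1 ∧ σ ≤ ε / 2 :=
      ⟨min ρ (min 1 (ε / 2)), by positivity, min_le_left _ _,
        (min_le_right _ _).trans (min_le_left _ _), (min_le_right _ _).trans (min_le_right _ _)⟩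
    refine ⟨σ, hσ, fun p ⟨hpx, hpf⟩ => ?_⟩
    obtain ⟨hp, hpne, hpy⟩ := pos_and_fF1_lt_iff.1 hpf
    have hpx' : dist p.1 xbar < ε := by linarith
    have hpy' : ‖p.2 - ybar‖ < ε := by linarith
    have hpU : p ∈ gph F ∩ ball (xbar, ybar) ε := ⟨hp, hball hpx' (by rwa [dist_eq_norm])⟩
    by_cases hpF : p.1 ∈ Finv F ybar
    · have hpbar : (p.1, ybar) ∈ gph F ∩ ball (xbar, ybar) ε :=
        ⟨hpF, hball (p := (p.1, ybar)) hpx' (by simpa using hε)⟩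
      rw [sdslope_eq_top hconv hpU hpbar hpne hσ1, max_eq_left le_top]
      exact le_top
    · refine iInf₂_le_of_le p ⟨hp, ?_, ?_, hpF⟩ (max_le_max ?_ le_rfl)
      · rw [← dist_eq_norm]; linarith
      · linarith
      · exact (FsdSlope_anti hσρ).trans
          (FsdSlope_le_sdslope hconv (isOpen_ball.mem_nhds hpU.2) hp hpne _)

end Normed

theorem statement13_general {X Y : Type*} [NormedAddCommGroup X] [NormedSpace ℝ X] [NormedAddCommGroup Y] [NormedSpace ℝ Y]
    (F : X → Set Y) (xbar : X) (ybar : Y)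
    (hconv : ∃ U ∈ 𝓝 (xbar, ybar), Convex ℝ (gph F ∩ U)) :
    ssds (fF1 F ybar) xbar ybar = ssdFq F xbar ybar 1 ∧
    mssds (fF1 F ybar) xbar ybar = msdFq F xbar ybar 1 := by
  constructor
  · simpa [ssds, ssdFq, xiq] using iSup_iInf_max_sdslope_eq hconv ⊥
  · have := iSup_iInf_max_sdslope_eq hconv fun p => equot (fF1 F ybar p) (dist p.1 xbar)
    rw [mssds, this, msdFq]
    refine iSup_congr fun ρ => iSup_congr fun _ => iInf_congr fun p => iInf_congr fun hp => ?_
    simp [xiq, fF1_of_mem hp.1, dist_eq_norm]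

/-- `q = 1`, `gph F` convex near `(xbar,ybar)`; with `f := ‖· - ybar‖` on `gph F`
and `+∞` elsewhere: `\overline{|∂f|}^{>} = \overline{|∂F|}_1` and
`\overline{|∂f|}^{>+} = \overline{|∂F|}^{+}_1`. -/
theorem statement13 {X Y : Type*} [NormedAddCommGroup X] [NormedSpace ℝ X] [NormedAddCommGroup Y] [NormedSpace ℝ Y]
    (F : X → Set Y) (xbar : X) (ybar : Y) (hbar : (xbar, ybar) ∈ gph F)
    (hconv : ∃ U ∈ 𝓝 (xbar, ybar), Convex ℝ (gph F ∩ U)) :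
    ssds (fF1 F ybar) xbar ybar = ssdFq F xbar ybar 1 ∧
    mssds (fF1 F ybar) xbar ybar = msdFq F xbar ybar 1 :=
  statement13_general F xbar ybar hconv

end HolderPaper
end
end

section
/- For every ρ > 0 and every (x,y) ∈ gph F with y ≠ ȳ, the nonlocal (q,ρ)-slope of F satisfies |∇F|◇_{q,ρ}(x,y) ≥ max{ q (d(y,ȳ))^{q−1} |∇F|_ρ(x,y), (d(y,ȳ))^q / d_ρ((x,y),(x̄,ȳ)) }. -/
open Filter Metric Set Topology
open scoped Classical

noncomputable section

namespace HolderPaper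

private lemma drho_pos' {X Y : Type*} [MetricSpace X] [MetricSpace Y] {ρ : ℝ} (hρ : 0 < ρ)
    {u p : X × Y} (h : u ≠ p) : 0 < drho ρ u p := by
  rcases eq_or_ne u.1 p.1 with h1 | h1
  · have h2 : u.2 ≠ p.2 := fun h2 => h (Prod.ext h1 h2)
    exact lt_max_of_lt_right (mul_pos hρ (dist_pos.2 h2))
  · exact lt_max_of_lt_left (dist_pos.2 h1)

private lemma key_rpow' {a b q : ℝ} (ha : 0 < a) (hb : 0 ≤ b) (hq0 : 0 < q) (hq1 : q ≤ 1) :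
    q * a ^ (q - 1) * max (a - b) 0 ≤ max (a ^ q - b ^ q) 0 := by
  rcases le_total a b with h | h
  · rw [max_eq_right (by linarith), mul_zero]
    exact le_max_right _ _
  · rw [max_eq_left (by linarith)]
    refine le_trans ?_ (le_max_left _ _)
    have hber := rpow_one_add_le_one_add_mul_self (s := b / a - 1)
      (by have : 0 ≤ b / a := div_nonneg hb ha.le; linarith) hq0.le hq1
    have h1 : (1 : ℝ) + (b / a - 1) = b / a := by ring
    rw [h1, Real.div_rpow hb ha.le] at hber
    have hA : 0 < a ^ q := Real.rpow_pos_of_pos ha q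
    rw [div_le_iff₀ hA] at hber
    have hber' : b ^ q * a ≤ (1 + q * (b / a - 1)) * a ^ q * a :=
      mul_le_mul_of_nonneg_right hber ha.le
    have e : (1 + q * (b / a - 1)) * a ^ q * a = a ^ q * a + q * (b - a) * a ^ q := by
      field_simp
    rw [e] at hber'
    have hsub : a ^ (q - 1) = a ^ q / a := by
      rw [Real.rpow_sub ha, Real.rpow_one]
    rw [hsub]
    rw [show q * (a ^ q / a) * (a - b) = q * a ^ q * (a - b) / a by ring, div_le_iff₀ ha]
    nlinarith [hber']

/-- for every `ρ > 0` and `(x,y) ∈ gph F` with `y ≠ ybar`,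
`|∇F|◇_{q,ρ}(x,y) ≥ max{q d(y,ybar)^{q-1} |∇F|_ρ(x,y), d(y,ybar)^q / d_ρ((x,y),(xbar,ybar))}`. -/
theorem statement14 {X Y : Type*} [MetricSpace X] [MetricSpace Y]
    (F : X → Set Y) (xbar : X) (ybar : Y) (hbar : (xbar, ybar) ∈ gph F)
    (qq : ℝ) (hq0 : 0 < qq) (hq1 : qq ≤ 1)
    (ρ : ℝ) (hρ : 0 < ρ) (p : X × Y) (hp : p ∈ gph F) (hy : p.2 ≠ ybar) :
    max (((qq * dist p.2 ybar ^ (qq - 1) : ℝ) : EReal) * FslopeR F ybar ρ p)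
        (equot ((dist p.2 ybar ^ qq : ℝ) : EReal) (drho ρ p (xbar, ybar)))
      ≤ FnslopeQ F ybar qq ρ p := by
  have ha : 0 < dist p.2 ybar := dist_pos.2 hy
  apply max_le
  · -- part 1: the scaled local slope
    set c : ℝ := qq * dist p.2 ybar ^ (qq - 1) with hc_def
    have hc : 0 < c := mul_pos hq0 (Real.rpow_pos_of_pos ha _)
    have hcE : (0 : EReal) < (c : EReal) := EReal.coe_pos.2 hc
    have hcT : (c : EReal) ≠ ⊤ := EReal.coe_ne_top c
    have hK : ∀ u : X × Y, u ∈ gph F → u ≠ p →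
        equot ((max (dist p.2 ybar - dist u.2 ybar) 0 : ℝ) : EReal) (drho ρ u p) * (c : EReal)
          ≤ FnslopeQ F ybar qq ρ p := by
      intro u hu hne
      have hd : 0 < drho ρ u p := drho_pos' hρ hne
      have hterm : equot ((max (dist p.2 ybar ^ qq - dist u.2 ybar ^ qq) 0 : ℝ) : EReal)
          (drho ρ u p) ≤ FnslopeQ F ybar qq ρ p := by
        simp only [FnslopeQ]
        exact le_iSup₂_of_le u ⟨hu, hne⟩ le_rfl
      refine le_trans ?_ hterm
      simp only [equot, if_neg hd.ne']
      rw [← EReal.coe_mul, ← EReal.coe_mul, ← EReal.coe_mul, EReal.coe_le_coe_iff]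
      have hkey := key_rpow' ha (dist_nonneg (x := u.2) (y := ybar)) hq0 hq1
      have hinv : 0 ≤ (drho ρ u p)⁻¹ := inv_nonneg.2 hd.le
      calc max (dist p.2 ybar - dist u.2 ybar) 0 * (drho ρ u p)⁻¹ * c
          = (qq * dist p.2 ybar ^ (qq - 1) * max (dist p.2 ybar - dist u.2 ybar) 0)
              * (drho ρ u p)⁻¹ := by rw [hc_def]; ring
        _ ≤ max (dist p.2 ybar ^ qq - dist u.2 ybar ^ qq) 0 * (drho ρ u p)⁻¹ :=
            mul_le_mul_of_nonneg_right hkey hinv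
    have hls : FslopeR F ybar ρ p ≤ FnslopeQ F ybar qq ρ p / (c : EReal) := by
      refine Filter.limsup_le_of_le (by isBoundedDefault) ?_
      filter_upwards [self_mem_nhdsWithin] with u hu
      rw [EReal.le_div_iff_mul_le hcE hcT]
      exact hK u hu.1 hu.2
    calc ((qq * dist p.2 ybar ^ (qq - 1) : ℝ) : EReal) * FslopeR F ybar ρ p
        = FslopeR F ybar ρ p * (c : EReal) := mul_comm _ _
      _ ≤ FnslopeQ F ybar qq ρ p := (EReal.le_div_iff_mul_le hcE hcT).mp hls
  · -- part 2: plug (xbar, ybar) into the supremum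
    have hne : ((xbar, ybar) : X × Y) ≠ p := by
      intro h
      exact hy (by rw [← h])
    have heq : equot ((dist p.2 ybar ^ qq : ℝ) : EReal) (drho ρ p (xbar, ybar))
        = equot ((max (dist p.2 ybar ^ qq - dist ((xbar, ybar) : X × Y).2 ybar ^ qq) 0 : ℝ)
            : EReal) (drho ρ (xbar, ybar) p) := by
      have e1 : dist ((xbar, ybar) : X × Y).2 ybar = 0 := dist_self ybar
      have e2 : max (dist p.2 ybar ^ qq - (0 : ℝ) ^ qq) 0 = dist p.2 ybar ^ qq := by
        rw [Real.zero_rpow hq0.ne', sub_zero]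
        exact max_eq_left (Real.rpow_nonneg dist_nonneg qq)
      have e3 : drho ρ p ((xbar, ybar) : X × Y) = drho ρ ((xbar, ybar) : X × Y) p := by
        simp [drho, dist_comm]
      rw [e1, e2, e3]
    rw [heq]
    simp only [FnslopeQ]
    exact le_iSup₂_of_le (xbar, ybar) ⟨hbar, hne⟩ le_rfl

end HolderPaper
end
end

section
/- The uniform strict q-slope, the modified strict q-slope and the strict q-slope of F at (x̄,ȳ) satisfy the chain of inequalities \overline{|∇F|}^◇_q(x̄,ȳ) ≥ \overline{|∇F|}^{+}_q(x̄,ȳ) ≥ \overline{|∇F|}_q(x̄,ȳ). -/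
open Filter Metric Set Topology
open scoped Classical

noncomputable section

namespace HolderPaper

/-! ### Auxiliary lemmas -/

section Aux

lemma emul_left_mono {c : ℝ} (hc : 0 ≤ c) {x y : EReal} (h : x ≤ y) :
    (c : EReal) * x ≤ (c : EReal) * y :=
  mul_le_mul_of_nonneg_left h (by exact_mod_cast hc)

lemma emul_cancel {c : ℝ} (hc : c ≠ 0) (x : EReal) :
    ((c⁻¹ : ℝ) : EReal) * ((c : EReal) * x) = x := by
  rw [← mul_assoc, ← EReal.coe_mul, inv_mul_cancel₀ hc]
  exact one_mul x

lemma emul_le_iff {c : ℝ} (hc : 0 < c) {x y : EReal} :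
    (c : EReal) * x ≤ y ↔ x ≤ ((c⁻¹ : ℝ) : EReal) * y := by
  constructor
  · intro h
    have h2 := emul_left_mono (inv_nonneg.2 hc.le) h
    rwa [emul_cancel hc.ne'] at h2
  · intro h
    have h2 := emul_left_mono hc.le h
    have h3 : (c : EReal) * (((c⁻¹ : ℝ) : EReal) * y) = y := by
      have h4 := emul_cancel (inv_ne_zero hc.ne') y
      rwa [inv_inv] at h4
    rwa [h3] at h2

lemma equot_coe_pos {a d : ℝ} (hd : 0 < d) : equot (a : EReal) d = ((a / d : ℝ) : EReal) := by
  unfold equot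
  rw [if_neg hd.ne', ← EReal.coe_mul, div_eq_mul_inv]

lemma equot_nonneg {a : ℝ} (ha : 0 ≤ a) {d : ℝ} (hd : 0 ≤ d) : 0 ≤ equot (a : EReal) d := by
  unfold equot
  split
  · exact le_top
  · rw [← EReal.coe_mul]
    exact_mod_cast mul_nonneg ha (inv_nonneg.2 hd)

lemma equot_mono_num {a b : ℝ} (h : a ≤ b) {d : ℝ} (hd : 0 ≤ d) :
    equot (a : EReal) d ≤ equot (b : EReal) d := by
  rcases eq_or_lt_of_le hd with h0 | h0
  · unfold equot; rw [if_pos h0.symm, if_pos h0.symm]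
  · rw [equot_coe_pos h0, equot_coe_pos h0, EReal.coe_le_coe_iff]
    gcongr

lemma equot_anti_den {a : ℝ} (ha : 0 ≤ a) {d e : ℝ} (hd : 0 ≤ d) (hde : d ≤ e) :
    equot (a : EReal) e ≤ equot (a : EReal) d := by
  rcases eq_or_lt_of_le hd with h0 | h0
  · unfold equot; rw [if_pos h0.symm]; exact le_top
  · have he : 0 < e := lt_of_lt_of_le h0 hde
    rw [equot_coe_pos h0, equot_coe_pos he, EReal.coe_le_coe_iff]
    gcongr

lemma emul_equot {c : ℝ} (hc : 0 < c) (a d : ℝ) :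
    (c : EReal) * equot (a : EReal) d = equot ((c * a : ℝ) : EReal) d := by
  unfold equot
  split
  · exact EReal.coe_mul_top_of_pos hc
  · rw [← mul_assoc, ← EReal.coe_mul]

lemma concave_key {q t s : ℝ} (hq0 : 0 < q) (hq1 : q ≤ 1) (ht : 0 < t) (hs : 0 ≤ s) :
    q * t ^ (q - 1) * (t - s) ≤ t ^ q - s ^ q := by
  have hr : -1 ≤ s / t - 1 := by
    have : 0 ≤ s / t := div_nonneg hs ht.le
    linarith
  have hB := rpow_one_add_le_one_add_mul_self hr hq0.le hq1
  rw [show (1 : ℝ) + (s / t - 1) = s / t by ring] at hB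
  rw [Real.div_rpow hs ht.le] at hB
  have htq : 0 < t ^ q := Real.rpow_pos_of_pos ht _
  have h1 : s ^ q ≤ t ^ q * (1 + q * (s / t - 1)) := by
    rw [div_le_iff₀ htq] at hB
    linarith [hB]
  have h2 : t ^ (q - 1) * t = t ^ q := by
    nth_rw 2 [← Real.rpow_one t]
    rw [← Real.rpow_add ht]
    ring_nf
  have h3 : t ^ q * (s / t) = t ^ (q - 1) * s := by
    rw [← h2]
    field_simp
  have h1' : s ^ q ≤ t ^ q + q * (t ^ (q - 1) * s) - q * t ^ q := by
    calc s ^ q ≤ t ^ q * (1 + q * (s / t - 1)) := h1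
    _ = t ^ q + q * (t ^ q * (s / t)) - q * t ^ q := by ring
    _ = t ^ q + q * (t ^ (q - 1) * s) - q * t ^ q := by rw [h3]
  have h2' : q * (t ^ (q - 1) * t) = q * t ^ q := by rw [h2]
  nlinarith [h1', h2']

variable {X Y : Type*} [MetricSpace X] [MetricSpace Y]

lemma drho_nonneg {ρ : ℝ} (hρ : 0 ≤ ρ) (u p : X × Y) : 0 ≤ drho ρ u p :=
  le_max_of_le_left dist_nonneg

lemma drho_mono {ρ σ : ℝ} (hρσ : ρ ≤ σ) (u p : X × Y) : drho ρ u p ≤ drho σ u p :=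
  max_le_max le_rfl (mul_le_mul_of_nonneg_right hρσ dist_nonneg)

lemma FslopeR_anti (F : X → Set Y) (ybar : Y) {ρ σ : ℝ} (hρ : 0 ≤ ρ) (hρσ : ρ ≤ σ) (p : X × Y) :
    FslopeR F ybar σ p ≤ FslopeR F ybar ρ p := by
  refine Filter.limsup_le_limsup (Filter.Eventually.of_forall fun u => ?_)
    (by isBoundedDefault) (by isBoundedDefault)
  exact equot_anti_den (le_max_right _ _) (drho_nonneg hρ u p) (drho_mono hρσ u p)

lemma caseA (F : X → Set Y) (ybar : Y) {qq : ℝ} (hq0 : 0 < qq) (hq1 : qq ≤ 1)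
    {ρ : ℝ} (hρ : 0 < ρ) {p : X × Y} (hy : p.2 ≠ ybar) :
    ((qq * dist p.2 ybar ^ (qq - 1) : ℝ) : EReal) * FslopeR F ybar ρ p ≤
      FnslopeQ F ybar qq ρ p := by
  have hdy0 : 0 < dist p.2 ybar := dist_pos.2 hy
  have hc : 0 < qq * dist p.2 ybar ^ (qq - 1) :=
    mul_pos hq0 (Real.rpow_pos_of_pos hdy0 _)
  rw [emul_le_iff hc]
  refine Filter.limsup_le_of_le (by isBoundedDefault) ?_
  filter_upwards [eventually_mem_nhdsWithin] with u hu
  rw [← emul_le_iff hc, emul_equot hc]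
  have hnum : qq * dist p.2 ybar ^ (qq - 1) * max (dist p.2 ybar - dist u.2 ybar) 0
      ≤ max (dist p.2 ybar ^ qq - dist u.2 ybar ^ qq) 0 := by
    rcases le_total (dist p.2 ybar) (dist u.2 ybar) with h | h
    · rw [max_eq_right (by linarith), mul_zero]
      exact le_max_right _ _
    · rw [max_eq_left (by linarith)]
      exact le_trans (concave_key hq0 hq1 hdy0 dist_nonneg) (le_max_left _ _)
  refine le_trans (equot_mono_num hnum (drho_nonneg hρ.le u p)) ?_
  exact le_iSup₂_of_le u ⟨hu.1, hu.2⟩ le_rfl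

end Aux

/-- `\overline{|∇F|}^◇_q ≥ \overline{|∇F|}^{+}_q ≥ \overline{|∇F|}_q`. -/
theorem statement15 {X Y : Type*} [MetricSpace X] [MetricSpace Y]
    (F : X → Set Y) (xbar : X) (ybar : Y) (hbar : (xbar, ybar) ∈ gph F)
    (qq : ℝ) (hq0 : 0 < qq) (hq1 : qq ≤ 1) :
    sosFq F xbar ybar qq ≤ msosFq F xbar ybar qq ∧
    msosFq F xbar ybar qq ≤ ussFq F xbar ybar qq := by
  have hgph : ∀ p : X × Y, p ∈ gph F → p.1 ∉ Finv F ybar → p.2 ≠ ybar := by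
    intro p hp hpf h
    exact hpf (by rw [Finv, Set.mem_setOf_eq, ← h]; exact hp)
  have hne : ∀ p : X × Y, p.1 ∉ Finv F ybar → (xbar, ybar) ≠ p := by
    intro p hpf h
    apply hpf
    rw [← h]
    exact hbar
  have key0 : ∀ (ρ : ℝ), 0 ≤ ρ → ∀ (p : X × Y), p ∈ gph F → p.1 ∉ Finv F ybar →
      equot ((dist p.2 ybar ^ qq : ℝ) : EReal) (drho ρ (xbar, ybar) p) ≤
        FnslopeQ F ybar qq ρ p := by
    intro ρ hρ p hpg hpf
    refine le_trans (equot_mono_num ?_ (drho_nonneg hρ _ _))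
      (le_iSup₂_of_le (xbar, ybar) ⟨hbar, hne p hpf⟩ le_rfl)
    have h0 : dist (xbar, ybar).2 ybar ^ qq = 0 := by
      simp [Real.zero_rpow hq0.ne']
    rw [h0, sub_zero]
    exact le_max_left _ _
  constructor
  · -- sosFq ≤ msosFq
    unfold sosFq msosFq
    rw [emul_le_iff hq0]
    refine iSup₂_le fun ρ hρ => ?_
    rw [← emul_le_iff hq0]
    refine le_trans ?_ (le_iSup₂ ρ hρ)
    refine le_iInf₂ fun p hp => ?_
    refine le_trans (emul_left_mono hq0.le (iInf₂_le p hp)) ?_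
    rw [← mul_assoc, ← EReal.coe_mul]
    exact le_max_left _ _
  · -- msosFq ≤ ussFq
    by_contra hcon
    push_neg at hcon
    have huss0 : (0 : EReal) ≤ ussFq F xbar ybar qq := by
      unfold ussFq
      refine le_trans ?_ (le_iSup₂ (1 : ℝ) one_pos)
      refine le_iInf₂ fun p hp => ?_
      exact le_trans (equot_nonneg (Real.rpow_nonneg dist_nonneg qq) (drho_nonneg zero_le_one _ _))
        (key0 1 zero_le_one p hp.1 hp.2.2.2)
    obtain ⟨b, hb1, hb2⟩ := EReal.exists_between_coe_real hcon
    have hb0 : (0 : ℝ) < b := by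
      have h := lt_of_le_of_lt huss0 hb1
      exact_mod_cast h
    rw [msosFq, lt_iSup_iff] at hb2
    obtain ⟨σ, hb2⟩ := hb2
    rw [lt_iSup_iff] at hb2
    obtain ⟨hσ, hb2⟩ := hb2
    set ρ := min σ (min 1 b⁻¹) with hρdef
    have hρ0 : 0 < ρ := lt_min hσ (lt_min one_pos (inv_pos.2 hb0))
    have hρσ : ρ ≤ σ := min_le_left _ _
    have hρ1 : ρ ≤ 1 := le_trans (min_le_right _ _) (min_le_left _ _)
    have hρb : ρ ≤ b⁻¹ := le_trans (min_le_right _ _) (min_le_right _ _)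
    have hmain : (b : EReal) ≤
        ⨅ (p : X × Y)
          (_ : p ∈ gph F ∧ dist p.1 xbar < ρ ∧ dist p.2 ybar < ρ ∧ p.1 ∉ Finv F ybar),
          FnslopeQ F ybar qq ρ p := by
      refine le_iInf₂ fun p hp => ?_
      obtain ⟨hpg, hpx, hpy, hpf⟩ := hp
      have hy : p.2 ≠ ybar := hgph p hpg hpf
      have hdy0 : 0 < dist p.2 ybar := dist_pos.2 hy
      have hdx0 : 0 < dist p.1 xbar := by
        rw [dist_pos]
        intro h
        exact hpf (by rw [Finv, Set.mem_setOf_eq, h]; exact hbar)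
      have hbp := iInf₂_le
        (f := fun (p : X × Y)
            (_ : p ∈ gph F ∧ dist p.1 xbar < σ ∧ dist p.2 ybar < σ ∧ p.1 ∉ Finv F ybar) =>
          max (((qq * dist p.2 ybar ^ (qq - 1) : ℝ) : EReal) * FslopeR F ybar σ p)
            (equot ((dist p.2 ybar ^ qq : ℝ) : EReal) (dist p.1 xbar)))
        p ⟨hpg, lt_of_lt_of_le hpx hρσ, lt_of_lt_of_le hpy hρσ, hpf⟩
      have hbmax := lt_of_lt_of_le hb2 hbp
      rcases lt_max_iff.1 hbmax with hA | hB
      · exact le_trans hA.le (le_trans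
          (emul_left_mono (mul_nonneg hq0.le (Real.rpow_nonneg dist_nonneg _))
            (FslopeR_anti F ybar hρ0.le hρσ p))
          (caseA F ybar hq0 hq1 hρ0 hy))
      · refine le_trans ?_ (key0 ρ hρ0.le p hpg hpf)
        have hD : drho ρ (xbar, ybar) p = max (dist p.1 xbar) (ρ * dist p.2 ybar) := by
          unfold drho
          rw [dist_comm xbar, dist_comm ybar]
        rcases le_total (ρ * dist p.2 ybar) (dist p.1 xbar) with h | h
        · rw [hD, max_eq_left h]
          exact hB.le
        · rw [hD, max_eq_right h]
          have hρdy : 0 < ρ * dist p.2 ybar := mul_pos hρ0 hdy0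
          rw [equot_coe_pos hρdy, EReal.coe_le_coe_iff]
          have e1 : dist p.2 ybar ^ qq / (ρ * dist p.2 ybar) = dist p.2 ybar ^ (qq - 1) / ρ := by
            rw [Real.rpow_sub hdy0, Real.rpow_one, div_div, mul_comm ρ (dist p.2 ybar)]
          rw [e1]
          have e2 : (ρ : ℝ) ^ (qq - 1) ≤ dist p.2 ybar ^ (qq - 1) :=
            Real.rpow_le_rpow_of_nonpos hdy0 hpy.le (by linarith)
          have e3 : (1 : ℝ) ≤ ρ ^ (qq - 1) :=
            Real.one_le_rpow_of_pos_of_le_one_of_nonpos hρ0 hρ1 (by linarith)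
          have e4 : b ≤ 1 / ρ := by
            rw [le_div_iff₀ hρ0]
            calc b * ρ ≤ b * b⁻¹ := mul_le_mul_of_nonneg_left hρb hb0.le
            _ = 1 := mul_inv_cancel₀ hb0.ne'
          calc b ≤ 1 / ρ := e4
          _ ≤ dist p.2 ybar ^ (qq - 1) / ρ := by
            gcongr
            linarith
    have hfin : (b : EReal) ≤ ussFq F xbar ybar qq := by
      refine le_trans hmain ?_
      unfold ussFq
      exact le_iSup₂ (f := fun (r : ℝ) (_ : 0 < r) =>
        ⨅ (p : X × Y)
          (_ : p ∈ gph F ∧ dist p.1 xbar < r ∧ dist p.2 ybar < r ∧ p.1 ∉ Finv F ybar),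
          FnslopeQ F ybar qq r p) ρ hρ0
    exact absurd hb1 (not_lt.2 hfin)

end HolderPaper
end
end

section
/- If X and Y are normed linear spaces and the graph of F is convex on a neighbourhood of (x̄,ȳ), then q · sr_q[F](x̄,ȳ) ≤ \overline{|∂F|}_q(x̄,ȳ). -/
open Filter Metric Set Topology
open scoped Classical

noncomputable section

/-!
Fix `0 < c' < c < sr_q[F](x̄,ȳ)` and a small `ρ`. Let `(x,y) ∈ gph F` be close to `(x̄,ȳ)` with
`x ∉ F⁻¹(ȳ)`, and let `x* ∈ D*F(x,y)(w*)` with `‖w* - y*‖ ≤ ξ_q(y)ρ` for some `y* ∈ J(y-ȳ)`.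
Convexity of the graph near `(x̄,ȳ)` turns the Fréchet normal `(x*,-w*)` into a global one along
the segments to the nearby points `(u,ȳ)`, `u ∈ F⁻¹(ȳ)`, so
`(1 - ξ_q(y)ρ)‖y-ȳ‖ ≤ w*(y-ȳ) ≤ x*(x-u) ≤ ‖x*‖‖x-u‖`, whence
`(1 - ξ_q(y)ρ)‖y-ȳ‖ ≤ ‖x*‖ d(x,F⁻¹(ȳ))`. Subregularity gives `c d(x,F⁻¹(ȳ)) < ‖y-ȳ‖^q`, and
`q ≤ 1`, `‖y-ȳ‖ < 1` make `ξ_q(y)ρ ≤ ρ/q` as small as needed; together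
`c' < ‖y-ȳ‖^(q-1)‖x*‖`.
-/

theorem EReal.le_of_forall_pos_lt_of_coe_lt {a b : EReal} (hb : 0 ≤ b)
    (h : ∀ c' c : ℝ, 0 < c' → c' < c → (c : EReal) < a → (c' : EReal) ≤ b) : a ≤ b := by
  by_contra! hba
  obtain ⟨c, hbc, hca⟩ := EReal.exists_between_coe_real hba
  obtain ⟨c', hbc', hc'c⟩ := EReal.exists_between_coe_real hbc
  have hc'0 : 0 < c' := EReal.coe_pos.1 (hb.trans_lt hbc')
  exact (h c' c hc'0 (EReal.coe_lt_coe_iff.1 hc'c) hca).not_gt hbc'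

namespace HolderPaper

section Metric

variable {X Y : Type*} [MetricSpace X] [MetricSpace Y]

theorem le_mul_infDist_of_forall_dist_lt {s : Set X} {x : X} {R a k : ℝ} (hk : 0 ≤ k)
    (hs : s.Nonempty) (hR : infDist x s < R) (h : ∀ u ∈ s, dist x u < R → a ≤ k * dist x u) :
    a ≤ k * infDist x s := by
  by_contra! hlt
  rcases hk.eq_or_lt with rfl | hk
  · obtain ⟨u, hu, hxu⟩ := (infDist_lt_iff hs).1 hR
    linarith [h u hu hxu]
  · obtain ⟨u, hu, hxu⟩ := (infDist_lt_iff hs).1 (lt_min hR ((lt_div_iff₀' hk).2 hlt))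
    have hle := h u hu (hxu.trans_le (min_le_left _ _))
    have hlt' := (lt_div_iff₀' hk).1 (hxu.trans_le (min_le_right _ _))
    linarith

theorem eventually_mul_infDist_lt_of_lt_srq {F : X → Set Y} {xbar : X} {ybar : Y} {q c : ℝ}
    (hq : 0 < q) (hc : (c : EReal) < srq F xbar ybar q) :
    ∀ᶠ x in 𝓝[(Finv F ybar)ᶜ] xbar, ∀ y ∈ F x,
      c * infDist x (Finv F ybar) < dist y ybar ^ q := by
  filter_upwards [eventually_lt_of_lt_liminf hc, self_mem_nhdsWithin] with x hx hxF y hy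
  have hyne : y ≠ ybar := by rintro rfl; exact hxF hy
  have hpos : 0 < dist y ybar ^ q := Real.rpow_pos_of_pos (dist_pos.2 hyne) q
  rw [if_neg (Set.nonempty_iff_ne_empty.1 ⟨y, hy⟩), equot] at hx
  split_ifs at hx with hd
  · rwa [hd, mul_zero]
  · have hd : 0 < infDist x (Finv F ybar) := infDist_nonneg.lt_of_ne' hd
    rw [← EReal.coe_mul, EReal.coe_lt_coe_iff, ← div_eq_mul_inv, lt_div_iff₀ hd] at hx
    have hdist : infDist ybar (F x) ≤ dist y ybar := dist_comm y ybar ▸ infDist_le_dist_of_mem hy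
    exact hx.trans_le (Real.rpow_le_rpow infDist_nonneg hdist hq.le)

end Metric

theorem xiq_le_inv {Y : Type*} [NormedAddCommGroup Y] {q : ℝ} {ybar y : Y} (hq0 : 0 < q)
    (hq1 : q ≤ 1) (hy : ‖y - ybar‖ ≤ 1) :
    xiq q ybar y ≤ q⁻¹ := by
  rw [xiq, div_eq_mul_inv]
  exact mul_le_of_le_one_left (by positivity)
    (Real.rpow_le_one (norm_nonneg _) hy (by linarith))

section Normed

variable {X Y : Type*} [NormedAddCommGroup X] [NormedSpace ℝ X]
  [NormedAddCommGroup Y] [NormedSpace ℝ Y]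

/-- Along the segment from `p` to `r` the Fréchet quotient is the constant
`φ (r - p) / ‖r - p‖`, which therefore bounds the `limsup` in `ncone` from below. -/
theorem apply_add_apply_nonpos_of_mem_ncone {Ω : Set (X × Y)} {p r : X × Y}
    {φ : (X →L[ℝ] ℝ) × (Y →L[ℝ] ℝ)} (hφ : φ ∈ ncone Ω p) (hseg : segment ℝ p r ⊆ Ω) :
    φ.1 (r.1 - p.1) + φ.2 (r.2 - p.2) ≤ 0 := by
  by_contra! hpos
  have hrp : r ≠ p := by rintro rfl; simp at hpos
  set L := φ.1 (r.1 - p.1) + φ.2 (r.2 - p.2)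
  have hD : 0 < dist r p := dist_pos.2 hrp
  have hquot : ∀ t : ℝ, 0 < t →
      equot ((φ.1 ((p + t • (r - p)).1 - p.1) + φ.2 ((p + t • (r - p)).2 - p.2) : ℝ) : EReal)
        (dist (p + t • (r - p)) p) = ((L / dist r p : ℝ) : EReal) := by
    intro t ht
    have hdist : dist (p + t • (r - p)) p = t * dist r p := by
      rw [dist_eq_norm, add_sub_cancel_left, norm_smul, Real.norm_of_nonneg ht.le, dist_eq_norm]
    rw [hdist, equot, if_neg (by positivity), ← EReal.coe_mul]
    congr 1
    simp only [Prod.fst_add, Prod.snd_add, Prod.smul_fst, Prod.smul_snd, Prod.fst_sub,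
      Prod.snd_sub, add_sub_cancel_left, map_smul, smul_eq_mul]
    field_simp
    rfl
  have htend : Tendsto (fun t : ℝ => p + t • (r - p)) (𝓝[>] 0) (𝓝[Ω \ {p}] p) := by
    refine tendsto_nhdsWithin_iff.2 ⟨?_, ?_⟩
    · have hcont : Continuous fun t : ℝ => p + t • (r - p) := by fun_prop
      simpa using (hcont.tendsto 0).mono_left nhdsWithin_le_nhds
    · filter_upwards [Ioo_mem_nhdsGT one_pos] with t ht
      refine ⟨hseg (segment_eq_image' ℝ p r ▸ ⟨t, Ioo_subset_Icc_self ht, rfl⟩), ?_⟩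
      simpa [sub_eq_zero] using And.intro ht.1.ne' hrp
  have hlt : limsup _ (𝓝[Ω \ {p}] p) < ((L / dist r p : ℝ) : EReal) :=
    hφ.trans_lt (EReal.coe_pos.2 (div_pos hpos hD))
  obtain ⟨t, hval, ht⟩ :=
    ((htend.eventually (eventually_lt_of_limsup_lt hlt)).and self_mem_nhdsWithin).exists
  exact (hquot t ht ▸ hval).false

theorem apply_sub_le_of_mem_coderiv {F : X → Set Y} {x u : X} {y v : Y}
    {xs : X →L[ℝ] ℝ} {ws : Y →L[ℝ] ℝ} (hxs : xs ∈ coderiv F (x, y) ws)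
    (hseg : segment ℝ (x, y) (u, v) ⊆ gph F) :
    ws (y - v) ≤ xs (x - u) := by
  have hnormal := apply_add_apply_nonpos_of_mem_ncone hxs hseg
  simp only [neg_apply, map_sub] at hnormal ⊢
  linarith

theorem one_sub_mul_norm_le_apply_of_mem_Jdual {v : Y} {ys ws : Y →L[ℝ] ℝ} {σ : ℝ}
    (hys : ys ∈ Jdual v) (hws : ‖ws - ys‖ ≤ σ) :
    (1 - σ) * ‖v‖ ≤ ws v := by
  have hdiff : |(ws - ys) v| ≤ σ * ‖v‖ :=
    ((ws - ys).le_opNorm v).trans (mul_le_mul_of_nonneg_right hws (norm_nonneg v))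
  have hsplit : ws v = ys v + (ws - ys) v := by simp
  linarith [hys.2, neg_le_of_abs_le hdiff]

theorem FsdSlope_nonneg (F : X → Set Y) (ybar : Y) (σ : ℝ) (p : X × Y) :
    0 ≤ FsdSlope F ybar σ p :=
  le_iInf₂ fun xs _ => EReal.coe_nonneg.2 (norm_nonneg xs)

theorem coe_le_mul_FsdSlope {F : X → Set Y} {ybar : Y} {σ : ℝ} {p : X × Y} {a c : ℝ}
    (ha : 0 < a) (h : ∀ (xs : X →L[ℝ] ℝ) (ws ys : Y →L[ℝ] ℝ), ys ∈ Jdual (p.2 - ybar) →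
      ‖ws - ys‖ ≤ σ → xs ∈ coderiv F p ws → c ≤ a * ‖xs‖) :
    (c : EReal) ≤ (a : EReal) * FsdSlope F ybar σ p := by
  have hdiv : ((c / a : ℝ) : EReal) ≤ FsdSlope F ybar σ p :=
    le_iInf₂ fun xs ⟨ws, ⟨ys, hys, hws⟩, hxs⟩ =>
      EReal.coe_le_coe_iff.2 ((div_le_iff₀' ha).2 (h xs ws ys hys hws hxs))
  calc (c : EReal) = (a : EReal) * ((c / a : ℝ) : EReal) := by
        rw [← EReal.coe_mul, mul_div_cancel₀ _ ha.ne']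
    _ ≤ (a : EReal) * FsdSlope F ybar σ p :=
        mul_le_mul_of_nonneg_left hdiv (EReal.coe_nonneg.2 ha.le)

theorem lt_rpow_sub_one_mul {n d k c c' τ q : ℝ} (hn : 0 < n) (hd : 0 ≤ d) (hτ : 0 < τ)
    (hc' : c' ≤ τ * c) (hcd : c * d < n ^ q) (hk : τ * n ≤ k * d) :
    c' < n ^ (q - 1) * k := by
  have hnq : n ^ q = n ^ (q - 1) * n := by rw [Real.rpow_sub_one hn.ne', div_mul_cancel₀ _ hn.ne']
  have hpos : 0 < n ^ (q - 1) := Real.rpow_pos_of_pos hn _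
  refine lt_of_mul_lt_mul_right ?_ hd
  calc c' * d ≤ τ * (c * d) := by nlinarith
    _ < τ * n ^ q := mul_lt_mul_of_pos_left hcd hτ
    _ = n ^ (q - 1) * (τ * n) := by rw [hnq]; ring
    _ ≤ n ^ (q - 1) * (k * d) := mul_le_mul_of_nonneg_left hk hpos.le
    _ = n ^ (q - 1) * k * d := by ring

theorem coe_le_rpow_mul_FsdSlope {F : X → Set Y} {ybar : Y} {x : X} {y : Y} {q c c' σ R : ℝ}
    (hy : y ≠ ybar) (hne : (Finv F ybar).Nonempty) (hR : infDist x (Finv F ybar) < R)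
    (hseg : ∀ u ∈ Finv F ybar, dist x u < R → segment ℝ (x, y) (u, ybar) ⊆ gph F)
    (hσ : σ < 1) (hc' : c' ≤ (1 - σ) * c)
    (hsr : c * infDist x (Finv F ybar) < ‖y - ybar‖ ^ q) :
    (c' : EReal) ≤ ((‖y - ybar‖ ^ (q - 1) : ℝ) : EReal) * FsdSlope F ybar σ (x, y) := by
  have hn : 0 < ‖y - ybar‖ := norm_sub_pos_iff.2 hy
  refine coe_le_mul_FsdSlope (Real.rpow_pos_of_pos hn _) fun xs ws ys hys hws hxs => ?_
  have hxs_bound : (1 - σ) * ‖y - ybar‖ ≤ ‖xs‖ * infDist x (Finv F ybar) := by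
    refine le_mul_infDist_of_forall_dist_lt (norm_nonneg xs) hne hR fun u hu hxu => ?_
    calc (1 - σ) * ‖y - ybar‖ ≤ ws (y - ybar) := one_sub_mul_norm_le_apply_of_mem_Jdual hys hws
      _ ≤ xs (x - u) := apply_sub_le_of_mem_coderiv hxs (hseg u hu hxu)
      _ ≤ ‖xs‖ * dist x u := dist_eq_norm x u ▸ (le_abs_self _).trans (xs.le_opNorm _)
  exact (lt_rpow_sub_one_mul hn infDist_nonneg (by linarith) hc' hsr hxs_bound).le

def ssdFqAt (F : X → Set Y) (xbar : X) (ybar : Y) (qq ρ : ℝ) : EReal :=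
  ⨅ (p : X × Y)
    (_ : p ∈ gph F ∧ ‖p.1 - xbar‖ < ρ ∧ ‖p.2 - ybar‖ < ρ ∧ p.1 ∉ Finv F ybar),
    ((‖p.2 - ybar‖ ^ (qq - 1) : ℝ) : EReal) * FsdSlope F ybar (xiq qq ybar p.2 * ρ) p

theorem ssdFq_eq (F : X → Set Y) (xbar : X) (ybar : Y) (qq : ℝ) :
    ssdFq F xbar ybar qq = (qq : EReal) * ⨆ (ρ : ℝ) (_ : 0 < ρ), ssdFqAt F xbar ybar qq ρ :=
  rfl

theorem ssdFqAt_nonneg (F : X → Set Y) (xbar : X) (ybar : Y) (qq ρ : ℝ) :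
    0 ≤ ssdFqAt F xbar ybar qq ρ :=
  le_iInf₂ fun _ _ =>
    mul_nonneg (EReal.coe_nonneg.2 (Real.rpow_nonneg (norm_nonneg _) _)) (FsdSlope_nonneg ..)

theorem exists_coe_le_ssdFqAt {F : X → Set Y} {xbar : X} {ybar : Y} {qq c c' : ℝ}
    (hbar : (xbar, ybar) ∈ gph F) (hq0 : 0 < qq) (hq1 : qq ≤ 1)
    (hconv : ∃ U ∈ 𝓝 (xbar, ybar), Convex ℝ (gph F ∩ U))
    (hc'0 : 0 < c') (hc'c : c' < c) (hc : (c : EReal) < srq F xbar ybar qq) :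
    ∃ ρ > 0, (c' : EReal) ≤ ssdFqAt F xbar ybar qq ρ := by
  obtain ⟨U, hU, hUconv⟩ := hconv
  obtain ⟨r, hr, hball⟩ := Metric.mem_nhds_iff.1 hU
  obtain ⟨δ, hδ, hsr⟩ := Metric.eventually_nhds_iff.1
    (eventually_nhdsWithin_iff.1 (eventually_mul_infDist_lt_of_lt_srq hq0 hc))
  have hc0 : 0 < c := hc'0.trans hc'c
  set ε := 1 - c' / c
  have hε1 : ε < 1 := by linarith [div_pos hc'0 hc0]
  have hεc : (1 - ε) * c = c' := by rw [sub_sub_cancel, div_mul_cancel₀ _ hc0.ne']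
  have hε0 : 0 < ε := by linarith [(div_lt_one hc0).2 hc'c]
  -- `δ` for subregularity, `r / 2` to stay in `U`, and `1`, `qq * ε` for `ξ_q(y) ρ ≤ ε`
  set ρ := min δ (min (r / 2) (min 1 (qq * ε)))
  have hρ0 : 0 < ρ := by positivity
  have hρδ : ρ ≤ δ := min_le_left _ _
  have hρr : ρ ≤ r / 2 := (min_le_right _ _).trans (min_le_left _ _)
  have hρ1 : ρ ≤ 1 := (min_le_right _ _).trans ((min_le_right _ _).trans (min_le_left _ _))
  have hρε : ρ ≤ qq * ε := (min_le_right _ _).trans ((min_le_right _ _).trans (min_le_right _ _))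
  refine ⟨ρ, hρ0, le_iInf₂ fun ⟨x, y⟩ ⟨hxy, hx, hy, hxF⟩ => ?_⟩
  have hyne : y ≠ ybar := by rintro rfl; exact hxF hxy
  have hmemU : ∀ u : X, dist u xbar < r → ∀ v : Y, dist v ybar < r → (u, v) ∈ U := fun u hu v hv =>
    hball (by rw [mem_ball, Prod.dist_eq]; exact max_lt hu hv)
  have hseg : ∀ u ∈ Finv F ybar, dist x u < ρ → segment ℝ (x, y) (u, ybar) ⊆ gph F :=
    fun u hu hxu => (hUconv.segment_subset
      ⟨hxy, hmemU x (by rw [dist_eq_norm]; linarith) y (by rw [dist_eq_norm]; linarith)⟩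
      ⟨hu, hmemU u (by linarith [dist_triangle_left u xbar x, dist_eq_norm x xbar])
        ybar (by simpa using hr)⟩).trans inter_subset_left
  have hσ : xiq qq ybar y * ρ ≤ ε :=
    calc xiq qq ybar y * ρ ≤ qq⁻¹ * (qq * ε) :=
          mul_le_mul (xiq_le_inv hq0 hq1 (by linarith)) hρε hρ0.le (by positivity)
      _ = ε := by field_simp
  have hxbar : xbar ∈ Finv F ybar := hbar
  refine coe_le_rpow_mul_FsdSlope hyne ⟨xbar, hxbar⟩
    ((infDist_le_dist_of_mem hxbar).trans_lt (dist_eq_norm x xbar ▸ hx)) hseg (by linarith)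
    (by rw [← hεc]; exact mul_le_mul_of_nonneg_right (by linarith) hc0.le) ?_
  simpa [dist_eq_norm] using hsr (show dist x xbar < δ by rw [dist_eq_norm]; linarith) hxF y hxy

end Normed

/-- in normed spaces, if `gph F` is convex near `(xbar,ybar)`, then
`q · sr_q[F](xbar,ybar) ≤ \overline{|∂F|}_q(xbar,ybar)`. -/
theorem statement18 {X Y : Type*} [NormedAddCommGroup X] [NormedSpace ℝ X] [NormedAddCommGroup Y] [NormedSpace ℝ Y]
    (F : X → Set Y) (xbar : X) (ybar : Y) (hbar : (xbar, ybar) ∈ gph F)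
    (qq : ℝ) (hq0 : 0 < qq) (hq1 : qq ≤ 1)
    (hconv : ∃ U ∈ 𝓝 (xbar, ybar), Convex ℝ (gph F ∩ U)) :
    (qq : EReal) * srq F xbar ybar qq ≤ ssdFq F xbar ybar qq := by
  have hsup_nonneg : (0 : EReal) ≤ ⨆ (ρ : ℝ) (_ : 0 < ρ), ssdFqAt F xbar ybar qq ρ :=
    le_iSup₂_of_le 1 one_pos (ssdFqAt_nonneg ..)
  have hsrq : srq F xbar ybar qq ≤ ⨆ (ρ : ℝ) (_ : 0 < ρ), ssdFqAt F xbar ybar qq ρ :=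
    EReal.le_of_forall_pos_lt_of_coe_lt hsup_nonneg fun c' c hc'0 hc'c hc => by
      obtain ⟨ρ, hρ, hle⟩ := exists_coe_le_ssdFqAt hbar hq0 hq1 hconv hc'0 hc'c hc
      exact le_iSup₂_of_le ρ hρ hle
  rw [ssdFq_eq]
  exact mul_le_mul_of_nonneg_left hsrq (EReal.coe_nonneg.2 hq0.le)

end HolderPaper
end
end
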